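/- BSC–BEC KL sandwich with matched χ²-parameter: for p, q ∈ (0,1) and δ ∈ [0,1/2], with δ_eff defined by (1−2δ_eff)² = η for any η ∈ [0,1] satisfying η = (1−2δ)², one has d(p∗δ_eff ‖ q∗δ_eff) ≤ d(p∗δ ‖ q∗δ) ≤ (1−2δ)²·d(p‖q). More generally, for a random Δ ∈ [0,1/2]: d(p∗δ_eff ‖ q∗δ_eff) ≤ E[d(p∗Δ ‖ q∗Δ)] ≤ E[(1−2Δ)²]·d(p‖q) where (1−2δ_eff)² = E[(1−2Δ)²]. -/

import Mathlib

/-- Binary convolution: `a ∗ b = a(1-b) + (1-a)b`. -/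
noncomputable def bconv (a b : ℝ) : ℝ := a * (1 - b) + (1 - a) * b

/-- Binary KL divergence `d(a‖b) = a ln(a/b) + (1-a) ln((1-a)/(1-b))`. -/
noncomputable def bkl (a b : ℝ) : ℝ :=
  a * Real.log (a / b) + (1 - a) * Real.log ((1 - a) / (1 - b))

/-!
Put `a = 1 - 2p`, `b = 1 - 2q` and `s = (1 - 2δ)²`. Expanding the logarithms shows that
`g(s) = d(p∗δ ‖ q∗δ)` is a power series `∑ cₘ s^(m+1)` on `[0,1]` whose coefficients are
nonnegative by the weighted AM–GM inequality `(n+1)·|a|·|b|ⁿ ≤ |a|ⁿ⁺¹ + n·|b|ⁿ⁺¹`.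
Hence `g` is convex, which gives the lower bound by Jensen's inequality, and
`g(s) ≤ s·g(1) = s·d(p‖q)` termwise, which gives the upper bound after averaging.
-/

open Real Set

lemma add_one_mul_mul_pow_le {a b : ℝ} (ha : 0 ≤ a) (hb : 0 ≤ b) (n : ℕ) :
    (n + 1) * a * b ^ n ≤ a ^ (n + 1) + n * b ^ (n + 1) := by
  have bernoulli := pow_add_mul_le_add_pow hb (by linarith : 0 ≤ 2 * b + (a - b)) (n + 1)
  rw [add_sub_cancel, Nat.add_sub_cancel] at bernoulli
  push_cast at bernoulli
  have : b ^ (n + 1) = b ^ n * b := pow_succ b n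
  nlinarith

/-- The `m`-th coefficient of `d((1-x)/2 ‖ (1-y)/2)` expanded in `x` and `y`. -/
noncomputable def bklCoeff (x y : ℝ) (m : ℕ) : ℝ :=
  (x ^ (2 * m + 2) - (2 * m + 2) * x * y ^ (2 * m + 1) + (2 * m + 1) * y ^ (2 * m + 2)) /
    ((2 * m + 1) * (2 * m + 2))

lemma bklCoeff_nonneg (x y : ℝ) (m : ℕ) : 0 ≤ bklCoeff x y m := by
  have amgm := add_one_mul_mul_pow_le (abs_nonneg x) (abs_nonneg y) (2 * m + 1)
  have hxy : x * y ^ (2 * m + 1) ≤ |x| * |y| ^ (2 * m + 1) := by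
    rw [pow_abs, ← abs_mul]; exact le_abs_self _
  have heven : ∀ z : ℝ, |z| ^ (2 * m + 2) = z ^ (2 * m + 2) :=
    fun z => (Even.pow_abs ⟨m + 1, by ring⟩ z)
  rw [heven, heven] at amgm
  push_cast at amgm
  unfold bklCoeff
  apply div_nonneg _ (by positivity)
  nlinarith

lemma bklCoeff_mul_mul (a b t : ℝ) (m : ℕ) :
    bklCoeff (a * t) (b * t) m = bklCoeff a b m * (t ^ 2) ^ (m + 1) := by
  unfold bklCoeff
  ring

lemma hasSum_pow_even_div {u : ℝ} (h : |u| < 1) :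
    HasSum (fun m : ℕ => u ^ (2 * m + 2) / (2 * m + 2)) (-(log (1 - u) + log (1 + u)) / 2) := by
  have hu2 : |u ^ 2| < 1 := by rw [abs_pow]; exact pow_lt_one₀ (abs_nonneg u) h two_ne_zero
  have hpos : 0 < 1 - u ∧ 0 < 1 + u := by constructor <;> linarith [abs_lt.1 h]
  have H := (hasSum_pow_div_log_of_abs_lt_one hu2).div_const 2
  rw [show 1 - u ^ 2 = (1 - u) * (1 + u) by ring, log_mul hpos.1.ne' hpos.2.ne'] at H
  refine H.congr_fun fun m => ?_
  rw [← pow_mul]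
  field_simp
  ring

lemma hasSum_bklCoeff {x y : ℝ} (hx : |x| < 1) (hy : |y| < 1) :
    HasSum (bklCoeff x y) (bkl ((1 - x) / 2) ((1 - y) / 2)) := by
  have hpos : ∀ {u : ℝ}, |u| < 1 → 0 < 1 - u ∧ 0 < 1 + u := fun h => by
    constructor <;> linarith [abs_lt.1 h]
  have H := (((hasSum_log_sub_log_of_abs_lt_one hx).sub
    (hasSum_log_sub_log_of_abs_lt_one hy)).mul_left (x / 2)).add
    ((hasSum_pow_even_div hy).sub (hasSum_pow_even_div hx))
  have e₁ : (1 - x) / 2 / ((1 - y) / 2) = (1 - x) / (1 - y) := by field_simp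
  have e₂ : (1 - (1 - x) / 2) / (1 - (1 - y) / 2) = (1 + x) / (1 + y) := by
    field_simp; ring_nf
  have hvalue : bkl ((1 - x) / 2) ((1 - y) / 2) =
      x / 2 * (log (1 + x) - log (1 - x) - (log (1 + y) - log (1 - y))) +
        (-(log (1 - y) + log (1 + y)) / 2 - -(log (1 - x) + log (1 + x)) / 2) := by
    unfold bkl
    rw [e₁, e₂, log_div (hpos hx).1.ne' (hpos hy).1.ne',
      log_div (hpos hx).2.ne' (hpos hy).2.ne']
    ring
  rw [hvalue]
  refine H.congr_fun fun m => ?_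
  unfold bklCoeff
  field_simp
  ring

section PowerSeries

variable {c : ℕ → ℝ} {g : ℝ → ℝ}

theorem convexOn_of_hasSum_pow_succ {S : Set ℝ} (hS : Convex ℝ S) (hS₀ : S ⊆ Ici 0)
    (hc : ∀ m, 0 ≤ c m) (hg : ∀ s ∈ S, HasSum (fun m => c m * s ^ (m + 1)) (g s)) :
    ConvexOn ℝ S g := by
  refine ⟨hS, fun x hx y hy a b ha hb hab => ?_⟩
  simp only [smul_eq_mul]
  refine hasSum_le (fun m => ?_) (hg _ (hS hx hy ha hb hab))
    (((hg x hx).mul_left a).add ((hg y hy).mul_left b))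
  have hpow := (convexOn_pow (m + 1)).2 (hS₀ hx) (hS₀ hy) ha hb hab
  simp only [smul_eq_mul] at hpow
  nlinarith [mul_le_mul_of_nonneg_left hpow (hc m)]

theorem le_mul_of_hasSum_pow_succ (hc : ∀ m, 0 ≤ c m) {s : ℝ} (hs : s ∈ Icc 0 1)
    (hgs : HasSum (fun m => c m * s ^ (m + 1)) (g s))
    (hg₁ : HasSum (fun m => c m * 1 ^ (m + 1)) (g 1)) :
    g s ≤ s * g 1 := by
  refine hasSum_le (fun m => ?_) hgs (hg₁.mul_left s)
  have hpow : s ^ (m + 1) ≤ s := pow_le_of_le_one hs.1 hs.2 m.succ_ne_zero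
  rw [one_pow]
  nlinarith [mul_le_mul_of_nonneg_left hpow (hc m)]

end PowerSeries

/-- `d(p∗δ ‖ q∗δ)` as a function of the contraction coefficient `s = (1 - 2δ)²`. -/
noncomputable def bklBSC (p q s : ℝ) : ℝ :=
  bkl (bconv p ((1 - √s) / 2)) (bconv q ((1 - √s) / 2))

lemma hasSum_bklBSC {p q s : ℝ} (hp : p ∈ Ioo 0 1) (hq : q ∈ Ioo 0 1) (hs : s ∈ Icc 0 1) :
    HasSum (fun m => bklCoeff (1 - 2 * p) (1 - 2 * q) m * s ^ (m + 1)) (bklBSC p q s) := by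
  have hsqrt : √s ≤ 1 := sqrt_le_one.2 hs.2
  have habs : ∀ r ∈ Ioo (0 : ℝ) 1, |(1 - 2 * r) * √s| < 1 := fun r hr => by
    rw [abs_mul, abs_of_nonneg (sqrt_nonneg s)]
    have : |1 - 2 * r| < 1 := abs_lt.2 ⟨by linarith [hr.2], by linarith [hr.1]⟩
    nlinarith [abs_nonneg (1 - 2 * r), sqrt_nonneg s]
  have hconv : ∀ r, bconv r ((1 - √s) / 2) = (1 - (1 - 2 * r) * √s) / 2 := fun r => by
    unfold bconv; ring
  convert hasSum_bklCoeff (habs p hp) (habs q hq) using 1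
  · funext m
    rw [bklCoeff_mul_mul, sq_sqrt hs.1]
  · rw [bklBSC, hconv, hconv]

lemma bklBSC_one (p q : ℝ) : bklBSC p q 1 = bkl p q := by
  simp [bklBSC, bconv]

lemma bklBSC_sq (p q : ℝ) {δ : ℝ} (hδ : δ ≤ 1 / 2) :
    bklBSC p q ((1 - 2 * δ) ^ 2) = bkl (bconv p δ) (bconv q δ) := by
  rw [bklBSC, sqrt_sq (by linarith), show (1 - (1 - 2 * δ)) / 2 = δ by ring]

/-- BSC–BEC KL sandwich with matched χ²-parameter: if `Δ` is a (finitely supported)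
random variable in `[0,1/2]` with weights `w`, `η = E[(1-2Δ)²]` and
`δ_eff = (1-√η)/2`, then for `p, q ∈ (0,1)`:
`d(p∗δ_eff ‖ q∗δ_eff) ≤ E[d(p∗Δ ‖ q∗Δ)] ≤ η·d(p‖q)`. -/
theorem kl_sandwich_matched_chiSq {ι : Type*} [Fintype ι]
    (w : ι → ℝ) (Δ : ι → ℝ)
    (hw : ∀ i, 0 ≤ w i) (hsum : ∑ i, w i = 1)
    (hΔ : ∀ i, Δ i ∈ Set.Icc (0:ℝ) (1/2))
    (η δeff : ℝ) (hη : η = ∑ i, w i * (1 - 2 * Δ i) ^ 2)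
    (hδeff : δeff = (1 - Real.sqrt η) / 2)
    (p q : ℝ) (hp : p ∈ Set.Ioo (0:ℝ) 1) (hq : q ∈ Set.Ioo (0:ℝ) 1) :
    bkl (bconv p δeff) (bconv q δeff) ≤ ∑ i, w i * bkl (bconv p (Δ i)) (bconv q (Δ i)) ∧
    ∑ i, w i * bkl (bconv p (Δ i)) (bconv q (Δ i)) ≤ η * bkl p q := by
  have hc := bklCoeff_nonneg (1 - 2 * p) (1 - 2 * q)
  have hg : ∀ s ∈ Icc (0 : ℝ) 1, HasSum _ (bklBSC p q s) := fun s hs => hasSum_bklBSC hp hq hs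
  have hs : ∀ i, (1 - 2 * Δ i) ^ 2 ∈ Icc (0 : ℝ) 1 := fun i =>
    ⟨sq_nonneg _, pow_le_one₀ (by linarith [(hΔ i).2]) (by linarith [(hΔ i).1])⟩
  have hconvex : ConvexOn ℝ (Icc 0 1) (bklBSC p q) :=
    convexOn_of_hasSum_pow_succ (convex_Icc 0 1) Icc_subset_Ici_self hc hg
  simp_rw [← bklBSC_sq p q (hΔ _).2]
  constructor
  · have jensen := hconvex.map_sum_le (t := Finset.univ) (fun i _ => hw i) hsum fun i _ => hs i
    simpa [bklBSC, hδeff, hη] using jensen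
  · have hg₁ := hg 1 ⟨zero_le_one, le_rfl⟩
    calc ∑ i, w i * bklBSC p q ((1 - 2 * Δ i) ^ 2)
        ≤ ∑ i, w i * ((1 - 2 * Δ i) ^ 2 * bklBSC p q 1) :=
          Finset.sum_le_sum fun i _ => mul_le_mul_of_nonneg_left
            (le_mul_of_hasSum_pow_succ hc (hs i) (hg _ (hs i)) hg₁) (hw i)
      _ = η * bkl p q := by
          rw [hη, bklBSC_one, Finset.sum_mul]
          exact Finset.sum_congr rfl fun i _ => by ring
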